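/- Let T be an associative trialgebra over a field K of characteristic zero, let d ∈ Der(T) be a derivation and φ ∈ Γ(T) an element of the centroid. Then the composition d∘φ is a derivation of T if and only if the commutator [d,φ] = d∘φ − φ∘d is a central derivation of T. -/
import Mathlib


variable {K T : Type*} [Field K] [CharZero K] [AddCommGroup T] [Module K T]

/-- An associative trialgebra structure: three bilinear products `l` (⊣), `r` (⊢), `m` (⊥)
satisfying the eleven trialgebra axioms. -/
structure IsTrialgebra (l r m : T →ₗ[K] T →ₗ[K] T) : Prop where
  ax1 : ∀ x y z : T, l (l x y) z = l x (l y z)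
  ax2 : ∀ x y z : T, l (l x y) z = l x (r y z)
  ax3 : ∀ x y z : T, l (r x y) z = r x (l y z)
  ax4 : ∀ x y z : T, r (l x y) z = r x (r y z)
  ax5 : ∀ x y z : T, r (r x y) z = r x (r y z)
  ax6 : ∀ x y z : T, l (l x y) z = l x (m y z)
  ax7 : ∀ x y z : T, l (m x y) z = m x (l y z)
  ax8 : ∀ x y z : T, m (l x y) z = m x (r y z)
  ax9 : ∀ x y z : T, m (r x y) z = r x (m y z)
  ax10 : ∀ x y z : T, r (m x y) z = r x (r y z)
  ax11 : ∀ x y z : T, m (m x y) z = m x (m y z)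

/-- A derivation of the trialgebra: the Leibniz rule holds for each of the three products. -/
def IsDeriv (l r m : T →ₗ[K] T →ₗ[K] T) (d : T →ₗ[K] T) : Prop :=
  ∀ x y : T,
    d (l x y) = l (d x) y + l x (d y) ∧
    d (r x y) = r (d x) y + r x (d y) ∧
    d (m x y) = m (d x) y + m x (d y)

/-- An element of the centroid of the trialgebra. -/
def IsCentroidElem (l r m : T →ₗ[K] T →ₗ[K] T) (ψ : T →ₗ[K] T) : Prop :=
  ∀ x y : T,
    (ψ (l x y) = l (ψ x) y ∧ ψ (l x y) = l x (ψ y)) ∧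
    (ψ (r x y) = r (ψ x) y ∧ ψ (r x y) = r x (ψ y)) ∧
    (ψ (m x y) = m (ψ x) y ∧ ψ (m x y) = m x (ψ y))

/-- Membership in the center Z(T) of the trialgebra. -/
def InCenter (l r m : T →ₗ[K] T →ₗ[K] T) (x : T) : Prop :=
  ∀ y : T, (l x y = 0 ∧ l y x = 0) ∧ (r x y = 0 ∧ r y x = 0) ∧ (m x y = 0 ∧ m y x = 0)

/-- A central derivation: a linear map with image in the center which kills all products. -/
def IsCentralDeriv (l r m : T →ₗ[K] T →ₗ[K] T) (ψ : T →ₗ[K] T) : Prop :=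
  (∀ x : T, InCenter l r m (ψ x)) ∧
  ∀ x y : T, ψ (l x y) = 0 ∧ ψ (r x y) = 0 ∧ ψ (m x y) = 0

private lemma trialg_aux (p : T →ₗ[K] T →ₗ[K] T) (d φ : T →ₗ[K] T)
    (hd : ∀ x y, d (p x y) = p (d x) y + p x (d y))
    (hφ1 : ∀ x y, φ (p x y) = p (φ x) y)
    (hφ2 : ∀ x y, φ (p x y) = p x (φ y)) :
    (∀ x y, d (φ (p x y)) = p (d (φ x)) y + p x (d (φ y))) ↔
    (∀ x y, p (d (φ x) - φ (d x)) y = 0 ∧ p x (d (φ y) - φ (d y)) = 0) := by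
  have e2 : ∀ x y, d (φ (p x y)) = p (φ (d x)) y + p x (d (φ y)) := by
    intro x y
    rw [hφ2 x y, hd x (φ y), ← hφ2 (d x) y, hφ1 (d x) y]
  have e1 : ∀ x y, d (φ (p x y)) = p (d (φ x)) y + p x (φ (d y)) := by
    intro x y
    rw [hφ1 x y, hd (φ x) y, ← hφ1 x (d y), hφ2 x (d y)]
  constructor
  · intro hδ x y
    constructor
    · have h1 : p (φ (d x)) y + p x (d (φ y)) = p (d (φ x)) y + p x (d (φ y)) := by
        rw [← e2 x y, hδ x y]
      have h1' := add_right_cancel h1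
      rw [map_sub, LinearMap.sub_apply, h1', sub_self]
    · have h2 : p x (d (φ y)) = p x (φ (d y)) := by
        have := (e1 x y).symm.trans (hδ x y)
        exact (add_left_cancel this).symm
      rw [map_sub, h2, sub_self]
  · intro hc x y
    have h1 : p (φ (d x)) y = p (d (φ x)) y := by
      have := (hc x y).1
      rw [map_sub, LinearMap.sub_apply, sub_eq_zero] at this
      exact this.symm
    have h2 : p x (φ (d y)) = p x (d (φ y)) := by
      have := (hc x y).2
      rw [map_sub, sub_eq_zero] at this
      exact this.symm
    rw [e2 x y, h1]

private lemma trialg_aux2 (p : T →ₗ[K] T →ₗ[K] T) (d φ : T →ₗ[K] T)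
    (hd : ∀ x y, d (p x y) = p (d x) y + p x (d y))
    (hφ1 : ∀ x y, φ (p x y) = p (φ x) y)
    (hφ2 : ∀ x y, φ (p x y) = p x (φ y)) :
    ∀ x y, d (φ (p x y)) - φ (d (p x y)) = p x (d (φ y) - φ (d y)) := by
  intro x y
  have e2 : d (φ (p x y)) = p (φ (d x)) y + p x (d (φ y)) := by
    rw [hφ2 x y, hd x (φ y), ← hφ2 (d x) y, hφ1 (d x) y]
  have e3 : φ (d (p x y)) = p (φ (d x)) y + p x (φ (d y)) := by
    rw [hd x y, map_add, hφ1 (d x) y, hφ2 x (d y)]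
  rw [e2, e3, map_sub]
  abel

/-- For `d` a derivation and `φ` in the centroid of an associative trialgebra, the
composition d∘φ is a derivation if and only if the commutator [d,φ] = d∘φ − φ∘d is a
central derivation. -/
theorem statement9 (l r m : T →ₗ[K] T →ₗ[K] T) (h : IsTrialgebra l r m)
    (d φ : T →ₗ[K] T) (hd : IsDeriv l r m d) (hφ : IsCentroidElem l r m φ) :
    IsDeriv l r m (d ∘ₗ φ) ↔ IsCentralDeriv l r m (d ∘ₗ φ - φ ∘ₗ d) := by
  have Al := trialg_aux l d φ (fun x y => (hd x y).1)
    (fun x y => ((hφ x y).1).1) (fun x y => ((hφ x y).1).2)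
  have Ar := trialg_aux r d φ (fun x y => (hd x y).2.1)
    (fun x y => ((hφ x y).2.1).1) (fun x y => ((hφ x y).2.1).2)
  have Am := trialg_aux m d φ (fun x y => (hd x y).2.2)
    (fun x y => ((hφ x y).2.2).1) (fun x y => ((hφ x y).2.2).2)
  have Bl := trialg_aux2 l d φ (fun x y => (hd x y).1)
    (fun x y => ((hφ x y).1).1) (fun x y => ((hφ x y).1).2)
  have Br := trialg_aux2 r d φ (fun x y => (hd x y).2.1)
    (fun x y => ((hφ x y).2.1).1) (fun x y => ((hφ x y).2.1).2)
  have Bm := trialg_aux2 m d φ (fun x y => (hd x y).2.2)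
    (fun x y => ((hφ x y).2.2).1) (fun x y => ((hφ x y).2.2).2)
  simp only [IsDeriv, IsCentralDeriv, InCenter, LinearMap.sub_apply,
    LinearMap.comp_apply]
  constructor
  · intro hδ
    have Hl := Al.mp (fun x y => (hδ x y).1)
    have Hr := Ar.mp (fun x y => (hδ x y).2.1)
    have Hm := Am.mp (fun x y => (hδ x y).2.2)
    refine ⟨fun x y => ⟨⟨(Hl x y).1, (Hl y x).2⟩, ⟨(Hr x y).1, (Hr y x).2⟩,
      ⟨(Hm x y).1, (Hm y x).2⟩⟩, fun x y => ⟨?_, ?_, ?_⟩⟩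
    · rw [Bl x y]; exact (Hl x y).2
    · rw [Br x y]; exact (Hr x y).2
    · rw [Bm x y]; exact (Hm x y).2
  · rintro ⟨hcen, -⟩
    intro x y
    refine ⟨Al.mpr (fun a b => ⟨(hcen a b).1.1, (hcen b a).1.2⟩) x y,
      Ar.mpr (fun a b => ⟨(hcen a b).2.1.1, (hcen b a).2.1.2⟩) x y,
      Am.mpr (fun a b => ⟨(hcen a b).2.2.1, (hcen b a).2.2.2⟩) x y⟩
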